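/- arXiv:2103.04695 — 4 statements merged into one kernel-verified Lean document; each statement's English description precedes it below -/
import Mathlib

section
/- Let (X, h) be an essentially minimal zero-dimensional system, let Y be its unique minimal set, let y ∈ Y, and let U be a compact open neighborhood of y. Then: (a) ⋃_{j ∈ ℤ} h^j(U) = X; (b) the range of λ_U is a finite subset of ℤ_{>0} (in particular λ_U never takes the value ∞); (c) U = { h^{λ_U(x)}(x) : x ∈ U }; (d) ⋃_{j ∈ ℤ_{>0}} h^j(U) = ⋃_{j ∈ ℤ_{<0}} h^j(U) = X. -/
open Set Topology

variable {X : Type*}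

/-- The first return time map `λ_U` of a subset `U` under the homeomorphism `h`:
`λ_U x = inf { n ∈ ℤ_{>0} | h^n x ∈ U }`, with value `∞` (i.e. `⊤ : ℕ∞`) when no
such `n` exists. -/
noncomputable def firstReturnTime [TopologicalSpace X] (h : X ≃ₜ X) (U : Set X) (x : X) : ℕ∞ :=
  sInf ((fun n : ℕ => (n : ℕ∞)) '' {n : ℕ | 0 < n ∧ (⇑h)^[n] x ∈ U})

/-- A partition of `X`: a finite collection of mutually disjoint compact open subsets
whose union is `X`. -/
def IsPartition [TopologicalSpace X] (P : Set (Set X)) : Prop :=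
  P.Finite ∧ (∀ U ∈ P, IsCompact U) ∧ (∀ U ∈ P, IsOpen U) ∧
    P.PairwiseDisjoint id ∧ ⋃₀ P = Set.univ

/-- `P'` is finer than `P`: every element of `P'` is contained in an element of `P`. -/
def Finer (P' P : Set (Set X)) : Prop :=
  ∀ U ∈ P', ∃ V ∈ P, U ⊆ V

/-- The data of a system of finite first return time maps:
`T` bases `base t`, numbers `K t`, pieces `Y t k ⊆ base t` and return times `J t k`. -/
structure ReturnSystem (X : Type*) where
  T : ℕ
  base : Fin T → Set X
  K : Fin T → ℕ
  Y : (t : Fin T) → Fin (K t) → Set X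
  J : (t : Fin T) → Fin (K t) → ℕ

/-- `S` is a system of finite first return time maps (for the homeomorphism `h`)
subordinate to `P`. -/
structure IsReturnSystem [TopologicalSpace X] (h : X ≃ₜ X) (P : Set (Set X))
    (S : ReturnSystem X) : Prop where
  T_pos : 0 < S.T
  base_isCompact : ∀ t, IsCompact (S.base t)
  base_isOpen : ∀ t, IsOpen (S.base t)
  base_subset : ∀ t, ∃ U ∈ P, S.base t ⊆ U
  K_pos : ∀ t, 0 < S.K t
  Y_isCompact : ∀ t k, IsCompact (S.Y t k)
  Y_isOpen : ∀ t k, IsOpen (S.Y t k)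
  Y_disjoint : ∀ t, ∀ k k', k ≠ k' → Disjoint (S.Y t k) (S.Y t k')
  Y_iUnion : ∀ t, (⋃ k, S.Y t k) = S.base t
  J_pos : ∀ t k, 0 < S.J t k
  returnTime : ∀ t k, ∀ x ∈ S.Y t k, firstReturnTime h (S.base t) x = (S.J t k : ℕ∞)
  image_disjoint : ∀ t, ∀ k k', k ≠ k' →
    Disjoint ((⇑h)^[S.J t k] '' S.Y t k) ((⇑h)^[S.J t k'] '' S.Y t k')
  image_iUnion : ∀ t, (⋃ k, (⇑h)^[S.J t k] '' S.Y t k) = S.base t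
  tower : ∀ x : X, ∃! p : Σ t : Fin S.T, Fin (S.K t) × ℕ,
    p.2.2 < S.J p.1 p.2.1 ∧ x ∈ (⇑h)^[p.2.2] '' S.Y p.1 p.2.1

/-- The partition `P₁(S) = { h^j (Y t k) | 0 ≤ j ≤ J t k - 1 }`. -/
def ReturnSystem.partOne [TopologicalSpace X] (h : X ≃ₜ X) (S : ReturnSystem X) :
    Set (Set X) :=
  {V | ∃ (t : Fin S.T) (k : Fin (S.K t)) (j : ℕ), j < S.J t k ∧ V = (⇑h)^[j] '' S.Y t k}

/-- The partition `P₂(S) = { h^j (Y t k) | 1 ≤ j ≤ J t k }`. -/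
def ReturnSystem.partTwo [TopologicalSpace X] (h : X ≃ₜ X) (S : ReturnSystem X) :
    Set (Set X) :=
  {V | ∃ (t : Fin S.T) (k : Fin (S.K t)) (j : ℕ),
    0 < j ∧ j ≤ S.J t k ∧ V = (⇑h)^[j] '' S.Y t k}

/-- `Y` is a minimal set for the system `(X, h)`: nonempty, closed, `h`-invariant, with no
nonempty proper closed `h`-invariant subset. -/
def IsMinimalSet [TopologicalSpace X] (h : X ≃ₜ X) (Y : Set X) : Prop :=
  Y.Nonempty ∧ IsClosed Y ∧ (⇑h) '' Y = Y ∧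
    ∀ Y' ⊆ Y, Y'.Nonempty → IsClosed Y' → (⇑h) '' Y' = Y' → Y' = Y

/-- `Y` is a minimal set of the subsystem of `(X, h)` on the (closed, invariant) subset `F`. -/
def IsMinimalSetWithin [TopologicalSpace X] (h : X ≃ₜ X) (F Y : Set X) : Prop :=
  Y ⊆ F ∧ IsMinimalSet h Y

/-- `(Z, ψ)` witnesses fiberwise essential minimality of `(X, h)`: `Z ⊆ X` is closed,
`ψ : X → Z` is a quotient map restricting to the identity on `Z` with `ψ ∘ h = ψ`, and each
fiber `ψ⁻¹(z)` is an essentially minimal subsystem whose (unique) minimal set contains `z`. -/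
structure IsFiberwiseWitness [TopologicalSpace X] (h : X ≃ₜ X) (Z : Set X)
    (ψ : X → Z) : Prop where
  closed : IsClosed Z
  quotient : IsQuotientMap ψ
  restrict_id : ∀ (x : X) (hx : x ∈ Z), ψ x = ⟨x, hx⟩
  comp_h : ∀ x, ψ (h x) = ψ x
  fiber : ∀ z : Z, ∃ Y : Set X, IsMinimalSetWithin h (ψ ⁻¹' {z}) Y ∧ (z : X) ∈ Y ∧
    ∀ Y', IsMinimalSetWithin h (ψ ⁻¹' {z}) Y' → Y' = Y

/-- `(X, h)` is fiberwise essentially minimal. -/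
def IsFiberwiseEssentiallyMinimal [TopologicalSpace X] (h : X ≃ₜ X) : Prop :=
  ∃ (Z : Set X) (ψ : X → Z), IsFiberwiseWitness h Z ψ

/-!
Since `Y` is the only minimal set, every nonempty closed forward-invariant set contains `Y`:
by Zorn's lemma and Cantor's intersection theorem it contains a minimal set. The points that
never return to `U` form such a set, which cannot contain `h⁻¹ y ∈ Y`, so it is empty: every point
returns to `U`, under `h` and, by the same argument for `h⁻¹`, under `h⁻¹`. Compactness of `U` bounds the return times
on `U`, and pulling a point of `U` back to its previous visit to `U` shows that the first return
map is onto `U`.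
-/

section MinimalSet

variable [TopologicalSpace X] (h : X ≃ₜ X)

theorem Homeomorph.image_symm_eq_self {A : Set X} (hA : ⇑h '' A = A) : ⇑h.symm '' A = A := by
  conv_lhs => rw [← hA]
  exact h.symm_image_image A

theorem isMinimalSet_symm_iff {Y : Set X} : IsMinimalSet h.symm Y ↔ IsMinimalSet h Y := by
  have image_iff : ∀ {A : Set X}, ⇑h.symm '' A = A ↔ ⇑h '' A = A := fun {A} =>
    ⟨fun hA => by simpa using h.symm.image_symm_eq_self hA, h.image_symm_eq_self⟩
  simp only [IsMinimalSet, image_iff]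

theorem exists_isMinimalSet_subset_of_mapsTo [CompactSpace X] {C : Set X} (hne : C.Nonempty)
    (hC : IsClosed C) (hmaps : MapsTo h C C) : ∃ Y ⊆ C, IsMinimalSet h Y := by
  set S : Set (Set X) := {E | E.Nonempty ∧ IsClosed E ∧ MapsTo h E E}
  have chain_bound : ∀ c ⊆ S, IsChain (· ⊆ ·) c → c.Nonempty → ∃ lb ∈ S, ∀ E ∈ c, lb ⊆ E := by
    rintro c hcS hchain ⟨E₀, hE₀⟩
    have : Nonempty c := ⟨⟨E₀, hE₀⟩⟩
    refine ⟨⋂₀ c, ⟨?_, isClosed_sInter fun E hE => (hcS hE).2.1,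
      mapsTo_sInter.2 fun E hE => (hcS hE).2.2.mono_left (sInter_subset_of_mem hE)⟩,
      fun E hE => sInter_subset_of_mem hE⟩
    exact IsCompact.nonempty_sInter_of_directed_nonempty_isCompact_isClosed
      (IsChain.directedOn (r := fun A B : Set X => B ⊆ A) hchain.symm) (fun E hE => (hcS hE).1)
      (fun E hE => (hcS hE).2.1.isCompact) fun E hE => (hcS hE).2.1
  obtain ⟨M, hMC, hM⟩ := zorn_superset_nonempty S chain_bound C ⟨hne, hC, hmaps⟩
  obtain ⟨hMne, hMcl, hMmaps⟩ := hM.prop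
  have eq_of_mapsTo : ∀ E ⊆ M, E.Nonempty → IsClosed E → MapsTo h E E → E = M :=
    fun E hEM hEne hEcl hEmaps => hM.eq_of_subset ⟨hEne, hEcl, hEmaps⟩ hEM
  refine ⟨M, hMC, hMne, hMcl, ?_, fun E hEM hEne hEcl hEinv => ?_⟩
  · -- `h '' M ⊆ M` is again closed because `h` is a homeomorphism, so minimality forces equality.
    exact eq_of_mapsTo _ hMmaps.image_subset (hMne.image h) (h.isClosedMap _ hMcl)
      ((mapsTo_image h M).mono_left hMmaps.image_subset)
  · exact eq_of_mapsTo E hEM hEne hEcl (mapsTo_iff_image_subset.2 hEinv.subset)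

end MinimalSet

section Recurrence

variable [TopologicalSpace X] [CompactSpace X] (h : X ≃ₜ X)

theorem exists_pos_iterate_mem_of_unique_isMinimalSet {Y : Set X} (hY : IsMinimalSet h Y)
    (hYuniq : ∀ Y', IsMinimalSet h Y' → Y' = Y) {y : X} (hyY : y ∈ Y) {U : Set X}
    (hUo : IsOpen U) (hyU : y ∈ U) (x : X) : ∃ n, 0 < n ∧ (⇑h)^[n] x ∈ U := by
  by_contra! hx
  set C := ⋂ (n) (_ : 0 < n), (⇑h)^[n] ⁻¹' Uᶜ
  have hxC : x ∈ C := by simpa [C] using hx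
  have hC : IsClosed C := isClosed_biInter fun n _ =>
    hUo.isClosed_compl.preimage (h.continuous.iterate n)
  have hmaps : MapsTo h C C := fun z hz => by
    simp only [C, mem_iInter, mem_preimage, ← Function.iterate_succ_apply] at hz ⊢
    exact fun n _ => hz (n + 1) n.succ_pos
  have hYC : Y ⊆ C := by
    obtain ⟨Y', hY'C, hY'⟩ := exists_isMinimalSet_subset_of_mapsTo h ⟨x, hxC⟩ hC hmaps
    exact hYuniq Y' hY' ▸ hY'C
  have hy' : h.symm y ∈ Y := h.image_symm_eq_self hY.2.2.1 ▸ mem_image_of_mem _ hyY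
  have hy'C := hYC hy'
  simp only [C, mem_iInter, mem_preimage] at hy'C
  exact hy'C 1 one_pos (by simpa using hyU)

end Recurrence

section FirstReturnTime

variable [TopologicalSpace X] (h : X ≃ₜ X) {U : Set X} {x : X}

theorem firstReturnTime_le {n : ℕ} (hn : 0 < n) (hx : (⇑h)^[n] x ∈ U) :
    firstReturnTime h U x ≤ n :=
  sInf_le ⟨n, ⟨hn, hx⟩, rfl⟩

theorem firstReturnTime_ne_top (hx : ∃ n, 0 < n ∧ (⇑h)^[n] x ∈ U) :
    firstReturnTime h U x ≠ ⊤ :=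
  let ⟨n, hn, hxn⟩ := hx
  ne_top_of_le_ne_top (ENat.natCast_ne_top n) (firstReturnTime_le h hn hxn)

theorem iterate_firstReturnTime_mem {m : ℕ} (hm : firstReturnTime h U x = m) :
    0 < m ∧ (⇑h)^[m] x ∈ U := by
  have hne : ((fun n : ℕ => (n : ℕ∞)) '' {n : ℕ | 0 < n ∧ (⇑h)^[n] x ∈ U}).Nonempty := by
    refine nonempty_iff_ne_empty.2 fun hempty => ENat.natCast_ne_top m ?_
    rw [← hm, firstReturnTime, hempty, sInf_empty]
  obtain ⟨n, hn, hnm⟩ := csInf_mem hne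
  rw [← firstReturnTime, hm, Nat.cast_inj] at hnm
  exact hnm ▸ hn

theorem firstReturnTime_eq_of_forall_not_mem {n : ℕ} (hn : 0 < n) (hx : (⇑h)^[n] x ∈ U)
    (hfirst : ∀ m, 0 < m → m < n → (⇑h)^[m] x ∉ U) : firstReturnTime h U x = n := by
  refine le_antisymm (firstReturnTime_le h hn hx) (le_sInf ?_)
  rintro _ ⟨m, ⟨hm, hmx⟩, rfl⟩
  exact Nat.cast_le.2 (not_lt.1 fun hlt => hfirst m hm hlt hmx)

theorem exists_firstReturnTime_eq_iterate {w : X} (hw : w ∈ U)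
    (hback : ∃ n, 0 < n ∧ (⇑h.symm)^[n] w ∈ U) :
    ∃ x ∈ U, ∃ m : ℕ, firstReturnTime h U x = m ∧ w = (⇑h)^[m] x := by
  classical
  obtain ⟨hn, hnU⟩ := Nat.find_spec hback
  set n := Nat.find hback
  have iterate_symm : ∀ k z, (⇑h)^[k] ((⇑h.symm)^[k] z) = z :=
    fun k => Function.LeftInverse.iterate h.apply_symm_apply k
  refine ⟨_, hnU, n, firstReturnTime_eq_of_forall_not_mem h hn (by rwa [iterate_symm]) ?_,
    (iterate_symm n w).symm⟩
  intro m hm hmn hmU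
  have hsplit : (⇑h.symm)^[n] w = (⇑h.symm)^[m] ((⇑h.symm)^[n - m] w) := by
    rw [← Function.iterate_add_apply, Nat.add_sub_cancel' hmn.le]
  rw [hsplit, iterate_symm] at hmU
  exact Nat.find_min hback (show n - m < n by omega) ⟨by omega, hmU⟩

theorem finite_range_firstReturnTime (hUc : IsCompact U) (hUo : IsOpen U)
    (hret : ∀ x ∈ U, ∃ n, 0 < n ∧ (⇑h)^[n] x ∈ U) :
    (range fun x : U => firstReturnTime h U x).Finite := by
  obtain ⟨t, ht⟩ := hUc.elim_finite_subcover (fun n : ℕ => (⇑h)^[n + 1] ⁻¹' U)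
    (fun n => hUo.preimage (h.continuous.iterate _)) fun x hx => by
      obtain ⟨n, hn, hxn⟩ := hret x hx
      obtain ⟨k, rfl⟩ := Nat.exists_eq_add_one_of_ne_zero hn.ne'
      exact mem_iUnion.2 ⟨k, hxn⟩
  have hle : ∀ x : U, firstReturnTime h U x ≤ (t.sup id + 1 : ℕ) := fun x => by
    obtain ⟨n, hnt, hxn⟩ := mem_iUnion₂.1 (ht x.2)
    calc firstReturnTime h U x ≤ (n + 1 : ℕ) := firstReturnTime_le h n.succ_pos hxn
      _ ≤ (t.sup id + 1 : ℕ) := Nat.cast_le.2 (Nat.succ_le_succ (Finset.le_sup (f := id) hnt))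
  refine ((finite_Iic (t.sup id + 1)).image ((↑) : ℕ → ℕ∞)).subset ?_
  rintro _ ⟨x, rfl⟩
  obtain ⟨k, hk, hkN⟩ := ENat.le_natCast_iff.1 (hle x)
  exact ⟨k, hkN, hk.symm⟩

theorem iUnion_iterate_succ_image_eq_univ (hret : ∀ x, ∃ n, 0 < n ∧ (⇑h.symm)^[n] x ∈ U) :
    ⋃ n : ℕ, (⇑h)^[n + 1] '' U = univ := by
  refine eq_univ_of_forall fun x => ?_
  obtain ⟨n, hn, hxn⟩ := hret x
  obtain ⟨k, rfl⟩ := Nat.exists_eq_add_one_of_ne_zero hn.ne'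
  exact mem_iUnion.2 ⟨k, _, hxn, Function.LeftInverse.iterate h.apply_symm_apply _ x⟩

end FirstReturnTime

theorem essentiallyMinimal_firstReturnTime_properties_general
    {X : Type*} [TopologicalSpace X] [CompactSpace X]
    (h : X ≃ₜ X)
    (Y : Set X) (hY : IsMinimalSet h Y) (hYuniq : ∀ Y', IsMinimalSet h Y' → Y' = Y)
    (y : X) (hyY : y ∈ Y) (U : Set X) (hUc : IsCompact U) (hUo : IsOpen U) (hyU : y ∈ U) :
    (⋃ j : ℤ, ⇑(h.toEquiv ^ j) '' U) = Set.univ ∧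
      ((Set.range fun x : U => firstReturnTime h U (x : X)).Finite ∧
        ∀ x ∈ U, firstReturnTime h U x ≠ ⊤) ∧
      U = {w | ∃ x ∈ U, ∃ m : ℕ, firstReturnTime h U x = (m : ℕ∞) ∧ w = (⇑h)^[m] x} ∧
      (⋃ n : ℕ, (⇑h)^[n + 1] '' U) = Set.univ ∧
      (⋃ n : ℕ, (⇑h.symm)^[n + 1] '' U) = Set.univ := by
  have fwd := exists_pos_iterate_mem_of_unique_isMinimalSet h hY hYuniq hyY hUo hyU
  have bwd := exists_pos_iterate_mem_of_unique_isMinimalSet h.symm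
    ((isMinimalSet_symm_iff h).2 hY) (fun Y' hY' => hYuniq Y' ((isMinimalSet_symm_iff h).1 hY'))
    hyY hUo hyU
  have hd₁ := iUnion_iterate_succ_image_eq_univ h bwd
  have hd₂ := iUnion_iterate_succ_image_eq_univ h.symm (by simpa only [h.symm_symm] using fwd)
  refine ⟨eq_univ_of_univ_subset (hd₁ ▸ iUnion_subset fun n => ?_),
    ⟨finite_range_firstReturnTime h hUc hUo fun x _ => fwd x,
      fun x _ => firstReturnTime_ne_top h (fwd x)⟩, ?_, hd₁, hd₂⟩
  · refine subset_iUnion_of_subset ((n + 1 : ℕ) : ℤ) ?_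
    rw [zpow_natCast, Equiv.Perm.coe_pow]
    rfl
  · ext w
    refine ⟨fun hw => exists_firstReturnTime_eq_iterate h hw (bwd w), ?_⟩
    rintro ⟨x, -, m, hm, rfl⟩
    exact (iterate_firstReturnTime_mem h hm).2

/-- Theorem (Statement 2): properties of first return times for essentially minimal
zero-dimensional systems. -/
theorem essentiallyMinimal_firstReturnTime_properties
    {X : Type*} [TopologicalSpace X] [CompactSpace X]
    [TopologicalSpace.MetrizableSpace X] [TotallyDisconnectedSpace X] (h : X ≃ₜ X)
    (Y : Set X) (hY : IsMinimalSet h Y) (hYuniq : ∀ Y', IsMinimalSet h Y' → Y' = Y)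
    (y : X) (hyY : y ∈ Y) (U : Set X) (hUc : IsCompact U) (hUo : IsOpen U) (hyU : y ∈ U) :
    (⋃ j : ℤ, ⇑(h.toEquiv ^ j) '' U) = Set.univ ∧
      ((Set.range fun x : U => firstReturnTime h U (x : X)).Finite ∧
        ∀ x ∈ U, firstReturnTime h U x ≠ ⊤) ∧
      U = {w | ∃ x ∈ U, ∃ m : ℕ, firstReturnTime h U x = (m : ℕ∞) ∧ w = (⇑h)^[m] x} ∧
      (⋃ n : ℕ, (⇑h)^[n + 1] '' U) = Set.univ ∧
      (⋃ n : ℕ, (⇑h.symm)^[n + 1] '' U) = Set.univ :=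
  essentiallyMinimal_firstReturnTime_properties_general h Y hY hYuniq y hyY U hUc hUo hyU
end

section
/- Let (X, h) be a zero-dimensional system, let P be a partition of X, and let S = (T, (X_t), (K_t), (Y_{t,k}), (J_{t,k})) and S' = (T', (X'_t), (K'_t), (Y'_{t,k}), (J'_{t,k})) be systems of finite first return time maps subordinate to P such that ⊔_{t=1}^T X_t = ⊔_{t=1}^{T'} X'_t. Then P_1(S') is finer than P_1(S) if and only if for each s ∈ {1, …, T'} and each l ∈ {1, …, K'_s} there exist t ∈ {1, …, T} and k ∈ {1, …, K_t} such that Y'_{s,l} ⊆ Y_{t,k}. -/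
open Set Topology

variable {X : Type*}

/-!
The levels `h^j (Y t k)`, `0 ≤ j < J t k`, of the towers of a return system partition `X`,
and a point of a level lies in the union of the bases exactly when the level is `0`. So if
`P₁(S')` is finer than `P₁(S)`, the level containing a base piece `Y'_{s,l}` (which lies in
the common union of bases) is a base piece `Y_{t,k}`. Conversely, if `Y'_{s,l} ⊆ Y_{t,k}`,
a point of `Y'_{s,l}` returns to the common union of bases at time `J_{t,k}`, while
`S'` keeps it outside that union before time `J'_{s,l}`; hence `J'_{s,l} ≤ J_{t,k}` and each
level `h^j (Y'_{s,l})` lies in the level `h^j (Y_{t,k})`.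
-/

namespace IsReturnSystem

variable [TopologicalSpace X] {h : X ≃ₜ X} {P : Set (Set X)}
  {S : ReturnSystem X} {t : Fin S.T} {k : Fin (S.K t)} {x : X}

theorem mem_iUnion_base_of_mem_Y (hS : IsReturnSystem h P S) (hx : x ∈ S.Y t k) :
    x ∈ ⋃ t', S.base t' :=
  mem_iUnion.mpr ⟨t, hS.Y_iUnion t ▸ mem_iUnion.mpr ⟨k, hx⟩⟩

theorem iterate_J_mem_iUnion_base (hS : IsReturnSystem h P S) (hx : x ∈ S.Y t k) :
    (⇑h)^[S.J t k] x ∈ ⋃ t', S.base t' :=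
  mem_iUnion.mpr ⟨t, hS.image_iUnion t ▸ mem_iUnion.mpr ⟨k, mem_image_of_mem _ hx⟩⟩

theorem level_eq_zero_of_mem_iUnion_base (hS : IsReturnSystem h P S) {j : ℕ}
    (hj : j < S.J t k) (hx : x ∈ (⇑h)^[j] '' S.Y t k) (hbase : x ∈ ⋃ t', S.base t') :
    j = 0 := by
  obtain ⟨t', htx⟩ := mem_iUnion.mp hbase
  obtain ⟨k', hk'x⟩ := mem_iUnion.mp (hS.Y_iUnion t' ▸ htx)
  obtain ⟨p, -, hunique⟩ := hS.tower x
  have hlevel_j := hunique ⟨t, k, j⟩ ⟨hj, hx⟩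
  have hlevel_0 := hunique ⟨t', k', 0⟩ ⟨hS.J_pos t' k', by simpa using hk'x⟩
  exact congrArg (fun p : Σ t : Fin S.T, Fin (S.K t) × ℕ => p.2.2) (hlevel_j.trans hlevel_0.symm)

theorem iterate_notMem_iUnion_base (hS : IsReturnSystem h P S) (hx : x ∈ S.Y t k) {j : ℕ}
    (hj_pos : 0 < j) (hj : j < S.J t k) : (⇑h)^[j] x ∉ ⋃ t', S.base t' := fun hbase =>
  hj_pos.ne' (hS.level_eq_zero_of_mem_iUnion_base hj (mem_image_of_mem _ hx) hbase)

theorem J_le_of_mem_Y {S' : ReturnSystem X} (hS : IsReturnSystem h P S)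
    (hS' : IsReturnSystem h P S') (hbases : (⋃ t, S.base t) = ⋃ t, S'.base t)
    {s : Fin S'.T} {l : Fin (S'.K s)} (hx' : x ∈ S'.Y s l) (hx : x ∈ S.Y t k) :
    S'.J s l ≤ S.J t k := by
  by_contra! hlt
  exact hS'.iterate_notMem_iUnion_base hx' (hS.J_pos t k) hlt
    (hbases ▸ hS.iterate_J_mem_iUnion_base hx)

end IsReturnSystem

theorem partOne_finer_iff_pieces_contained_general
    {X : Type*} [TopologicalSpace X] (h : X ≃ₜ X)
    (P : Set (Set X))
    (S S' : ReturnSystem X) (hS : IsReturnSystem h P S) (hS' : IsReturnSystem h P S')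
    (hbases : (⋃ t, S.base t) = ⋃ t, S'.base t) :
    Finer (S'.partOne h) (S.partOne h) ↔
      ∀ (s : Fin S'.T) (l : Fin (S'.K s)),
        ∃ (t : Fin S.T) (k : Fin (S.K t)), S'.Y s l ⊆ S.Y t k := by
  constructor
  · intro hfiner s l
    rcases (S'.Y s l).eq_empty_or_nonempty with hempty | ⟨x, hx⟩
    · exact ⟨⟨0, hS.T_pos⟩, ⟨0, hS.K_pos _⟩, by simp [hempty]⟩
    obtain ⟨_, ⟨t, k, j, hj, rfl⟩, hsub⟩ :=
      hfiner (S'.Y s l) ⟨s, l, 0, hS'.J_pos s l, by simp⟩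
    obtain rfl : j = 0 := hS.level_eq_zero_of_mem_iUnion_base hj (hsub hx)
      (hbases ▸ hS'.mem_iUnion_base_of_mem_Y hx)
    exact ⟨t, k, by simpa using hsub⟩
  · rintro hcontained _ ⟨s, l, j, hj, rfl⟩
    obtain ⟨t, k, hsub⟩ := hcontained s l
    rcases (S'.Y s l).eq_empty_or_nonempty with hempty | ⟨x, hx⟩
    · exact ⟨_, ⟨t, k, 0, hS.J_pos t k, rfl⟩, by simp [hempty]⟩
    exact ⟨_, ⟨t, k, j, hj.trans_le (hS.J_le_of_mem_Y hS' hbases hx (hsub hx)), rfl⟩,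
      image_mono hsub⟩

/-- Theorem (Statement 5): for two systems with the same union of bases, `P₁(S')` is finer
than `P₁(S)` iff every `Y'_{s,l}` is contained in some `Y_{t,k}`. -/
theorem partOne_finer_iff_pieces_contained
    {X : Type*} [TopologicalSpace X] [CompactSpace X]
    [TopologicalSpace.MetrizableSpace X] [TotallyDisconnectedSpace X] (h : X ≃ₜ X)
    (P : Set (Set X)) (hP : IsPartition P)
    (S S' : ReturnSystem X) (hS : IsReturnSystem h P S) (hS' : IsReturnSystem h P S')
    (hbases : (⋃ t, S.base t) = ⋃ t, S'.base t) :
    Finer (S'.partOne h) (S.partOne h) ↔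
      ∀ (s : Fin S'.T) (l : Fin (S'.K s)),
        ∃ (t : Fin S.T) (k : Fin (S.K t)), S'.Y s l ⊆ S.Y t k :=
  partOne_finer_iff_pieces_contained_general h P S S' hS hS' hbases
end

section
/- Let (X, h) be a zero-dimensional system, let P be a partition of X, let S = (T, (X_t), (K_t), (Y_{t,k}), (J_{t,k})) be a system of finite first return time maps subordinate to P, and let S^(1) be a system of finite first return time maps subordinate to the partition P_1(S). Then there exist a system S' = (T', (X'_t), (K'_t), (Y'_{t,k}), (J'_{t,k})) of finite first return time maps subordinate to P and a system S^(1)' = (T^(1)', (X^(1)'_t), (K^(1)'_t), (Y^(1)'_{t,k}), (J^(1)'_{t,k})) of finite first return time maps subordinate to P_1(S) such that: (a) T' = T and X'_t = X_t for all t ∈ {1, …, T}; (b) P_1(S') is finer than P_1(S) and P_2(S') is finer than P_2(S); (c) for each s ∈ {1, …, T^(1)'} there are t_s ∈ {1, …, T} and k_s ∈ {1, …, K'_{t_s}} such that X^(1)'_s = Y'_{t_s,k_s}. -/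
open Set Topology

variable {X : Type*}

/-!
Each base of `S1` lies in a level `h^j (Y t k)` of `S`; pulling it back by `h^j` gives a return
system whose bases lie in the pieces `Y t k` themselves. These bases are pairwise disjoint, since
distinct bases lie in distinct `h`-invariant columns, so together with the complement of their
union they form a clopen partition of `X`. Cutting every `Y t k` along this partition refines `S`
without changing its bases or return times, and each pulled-back base is one of the new pieces.
-/

open Function

namespace ReturnSystem

def refine (S : ReturnSystem X) {n : ℕ} (D : Fin n → Set X) : ReturnSystem X where
  T := S.T
  base := S.base
  K t := S.K t * n
  Y t i := S.Y t (finProdFinEquiv.symm i).1 ∩ D (finProdFinEquiv.symm i).2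
  J t i := S.J t (finProdFinEquiv.symm i).1

@[simp]
theorem refine_Y_finProdFinEquiv (S : ReturnSystem X) {n : ℕ} (D : Fin n → Set X)
    (t : Fin S.T) (k : Fin (S.K t)) (r : Fin n) :
    (S.refine D).Y t (finProdFinEquiv (k, r)) = S.Y t k ∩ D r := by
  simp [refine]

@[simp]
theorem refine_J_finProdFinEquiv (S : ReturnSystem X) {n : ℕ} (D : Fin n → Set X)
    (t : Fin S.T) (k : Fin (S.K t)) (r : Fin n) :
    (S.refine D).J t (finProdFinEquiv (k, r)) = S.J t k := by
  simp [refine]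

end ReturnSystem

section SnocComplUnion

variable {n : ℕ}

def snocComplUnion (C : Fin n → Set X) : Fin (n + 1) → Set X :=
  Fin.snoc (α := fun _ => Set X) C (⋃ s, C s)ᶜ

@[simp]
theorem snocComplUnion_castSucc (C : Fin n → Set X) (s : Fin n) :
    snocComplUnion C s.castSucc = C s :=
  Fin.snoc_castSucc ..

@[simp]
theorem snocComplUnion_last (C : Fin n → Set X) :
    snocComplUnion C (Fin.last n) = (⋃ s, C s)ᶜ :=
  Fin.snoc_last ..

theorem iUnion_snocComplUnion (C : Fin n → Set X) : ⋃ r, snocComplUnion C r = univ := by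
  refine eq_univ_of_forall fun x => mem_iUnion.2 ?_
  by_cases hx : x ∈ ⋃ s, C s
  · obtain ⟨s, hs⟩ := mem_iUnion.1 hx
    exact ⟨s.castSucc, by simpa using hs⟩
  · exact ⟨Fin.last n, by simpa using hx⟩

theorem pairwise_disjoint_snocComplUnion {C : Fin n → Set X} (hC : Pairwise (Disjoint on C)) :
    Pairwise (Disjoint on snocComplUnion C) := by
  have hlast (s : Fin n) : Disjoint (⋃ s, C s)ᶜ (C s) :=
    disjoint_compl_left.mono_right (subset_iUnion C s)
  intro r r' hne
  induction r using Fin.lastCases <;> induction r' using Fin.lastCases <;>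
    simp only [onFun, snocComplUnion_castSucc, snocComplUnion_last]
  · exact absurd rfl hne
  · exact hlast _
  · exact (hlast _).symm
  · exact hC fun h => hne (congrArg _ h)

theorem isClopen_snocComplUnion [TopologicalSpace X] {C : Fin n → Set X}
    (hC : ∀ s, IsClopen (C s)) (r : Fin (n + 1)) : IsClopen (snocComplUnion C r) := by
  induction r using Fin.lastCases
  · simpa using (isClopen_iUnion_of_finite hC).compl
  · simpa using hC _

end SnocComplUnion

section

variable [TopologicalSpace X]

namespace Homeomorph

variable (h : X ≃ₜ X)

theorem mem_image_iterate_iff {n : ℕ} {A : Set X} {x : X} :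
    x ∈ (⇑h)^[n] '' A ↔ (⇑h.symm)^[n] x ∈ A := by
  rw [image_eq_preimage_of_inverse (LeftInverse.iterate h.symm_apply_apply n)
    (LeftInverse.iterate h.apply_symm_apply n)]
  rfl

theorem isCompact_iterate_preimage {A : Set X} (hA : IsCompact A) (n : ℕ) :
    IsCompact ((⇑h)^[n] ⁻¹' A) := by
  rw [← image_eq_preimage_of_inverse (LeftInverse.iterate h.apply_symm_apply n)
    (LeftInverse.iterate h.symm_apply_apply n)]
  exact hA.image (h.symm.continuous.iterate n)

theorem mem_image_iterate_preimage_iterate {j m : ℕ} {A : Set X} {x : X} :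
    x ∈ (⇑h)^[j] '' ((⇑h)^[m] ⁻¹' A) ↔ (⇑h)^[m] x ∈ (⇑h)^[j] '' A := by
  have hcomm : Function.Commute (⇑h)^[m] (⇑h.symm)^[j] :=
    Function.Commute.iterate_iterate (fun x => by simp) m j
  rw [mem_image_iterate_iff, mem_image_iterate_iff, mem_preimage, hcomm.eq]

theorem image_iterate_preimage_iterate (j m : ℕ) (A : Set X) :
    (⇑h)^[j] '' ((⇑h)^[m] ⁻¹' A) = (⇑h)^[m] ⁻¹' ((⇑h)^[j] '' A) :=
  Set.ext fun _ => h.mem_image_iterate_preimage_iterate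

end Homeomorph

theorem firstReturnTime_iterate_preimage (h : X ≃ₜ X) (m : ℕ) (U : Set X) (x : X) :
    firstReturnTime h ((⇑h)^[m] ⁻¹' U) x = firstReturnTime h U ((⇑h)^[m] x) := by
  simp only [firstReturnTime, mem_preimage, (Function.Commute.iterate_iterate_self (⇑h) m _).eq]

namespace ReturnSystem

def column (h : X ≃ₜ X) (S : ReturnSystem X) (t : Fin S.T) : Set X :=
  {x | ∃ k j, j < S.J t k ∧ x ∈ (⇑h)^[j] '' S.Y t k}

def shift (h : X ≃ₜ X) (S : ReturnSystem X) (n : Fin S.T → ℕ) : ReturnSystem X where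
  T := S.T
  base t := (⇑h)^[n t] ⁻¹' S.base t
  K := S.K
  Y t k := (⇑h)^[n t] ⁻¹' S.Y t k
  J := S.J

end ReturnSystem

namespace IsReturnSystem

variable {h : X ≃ₜ X} {P : Set (Set X)} {S : ReturnSystem X} {n : ℕ} {D : Fin n → Set X}

theorem base_subset_column (hS : IsReturnSystem h P S) (t : Fin S.T) :
    S.base t ⊆ S.column h t := by
  intro x hx
  rw [← hS.Y_iUnion t] at hx
  obtain ⟨k, hk⟩ := mem_iUnion.1 hx
  exact ⟨k, 0, hS.J_pos t k, by simpa using hk⟩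

theorem exists_mem_column (hS : IsReturnSystem h P S) (x : X) : ∃ t, x ∈ S.column h t := by
  obtain ⟨⟨t, k, j⟩, ⟨hj, hx⟩, -⟩ := hS.tower x
  exact ⟨t, k, j, hj, hx⟩

theorem eq_of_mem_column (hS : IsReturnSystem h P S) {x : X} {t t' : Fin S.T}
    (hx : x ∈ S.column h t) (hx' : x ∈ S.column h t') : t = t' := by
  obtain ⟨k, j, hj, hxj⟩ := hx
  obtain ⟨k', j', hj', hxj'⟩ := hx'
  obtain ⟨p, -, huniq⟩ := hS.tower x
  exact congrArg Sigma.fst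
    ((huniq ⟨t, k, j⟩ ⟨hj, hxj⟩).trans (huniq ⟨t', k', j'⟩ ⟨hj', hxj'⟩).symm)

theorem pairwise_disjoint_base (hS : IsReturnSystem h P S) : Pairwise (Disjoint on S.base) :=
  fun _ _ hne => disjoint_left.2 fun _ hx hx' =>
    hne (hS.eq_of_mem_column (hS.base_subset_column _ hx) (hS.base_subset_column _ hx'))

/-- Leaving the top of a column, a point returns to its base. -/
theorem apply_mem_column (hS : IsReturnSystem h P S) {x : X} {t : Fin S.T}
    (hx : x ∈ S.column h t) : h x ∈ S.column h t := by
  obtain ⟨k, j, hj, y, hy, rfl⟩ := hx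
  have hsucc : h ((⇑h)^[j] y) = (⇑h)^[j + 1] y := (iterate_succ_apply' _ j y).symm
  rcases (show j + 1 ≤ S.J t k from hj).lt_or_eq with hlt | heq
  · exact ⟨k, j + 1, hlt, y, hy, hsucc.symm⟩
  · refine hS.base_subset_column t ?_
    rw [← hS.image_iUnion t, hsucc, heq]
    exact mem_iUnion.2 ⟨k, y, hy, rfl⟩

theorem apply_mem_column_iff (hS : IsReturnSystem h P S) {x : X} {t : Fin S.T} :
    h x ∈ S.column h t ↔ x ∈ S.column h t := by
  refine ⟨fun hx => ?_, hS.apply_mem_column⟩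
  obtain ⟨t', hx'⟩ := hS.exists_mem_column x
  rwa [hS.eq_of_mem_column hx (hS.apply_mem_column hx')]

theorem iterate_mem_column_iff (hS : IsReturnSystem h P S) {x : X} {t : Fin S.T} (n : ℕ) :
    (⇑h)^[n] x ∈ S.column h t ↔ x ∈ S.column h t := by
  induction n with
  | zero => rfl
  | succ n ih => rw [iterate_succ_apply', hS.apply_mem_column_iff, ih]

/-- Each point and all its iterates lie in the same column, so the shifted towers still
partition `X`. -/
theorem shift (hS : IsReturnSystem h P S) (n : Fin S.T → ℕ) {Q : Set (Set X)}
    (hQ : ∀ t, ∃ U ∈ Q, (⇑h)^[n t] ⁻¹' S.base t ⊆ U) :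
    IsReturnSystem h Q (S.shift h n) where
  T_pos := hS.T_pos
  base_isCompact t := h.isCompact_iterate_preimage (hS.base_isCompact t) _
  base_isOpen t := (hS.base_isOpen t).preimage (h.continuous.iterate _)
  base_subset := hQ
  K_pos := hS.K_pos
  Y_isCompact t k := h.isCompact_iterate_preimage (hS.Y_isCompact t k) _
  Y_isOpen t k := (hS.Y_isOpen t k).preimage (h.continuous.iterate _)
  Y_disjoint t k k' hne := (hS.Y_disjoint t k k' hne).preimage _
  Y_iUnion t := by simp only [ReturnSystem.shift, ← preimage_iUnion, hS.Y_iUnion t]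
  J_pos := hS.J_pos
  returnTime t k x hx := by
    simp only [ReturnSystem.shift, firstReturnTime_iterate_preimage]
    exact hS.returnTime t k _ hx
  image_disjoint t k k' hne := by
    simp only [ReturnSystem.shift, Homeomorph.image_iterate_preimage_iterate]
    exact (hS.image_disjoint t k k' hne).preimage _
  image_iUnion t := by
    simp only [ReturnSystem.shift, Homeomorph.image_iterate_preimage_iterate, ← preimage_iUnion,
      hS.image_iUnion t]
  tower x := by
    simp only [ReturnSystem.shift, Homeomorph.mem_image_iterate_preimage_iterate]
    obtain ⟨t, hx⟩ := hS.exists_mem_column x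
    obtain ⟨⟨t', k, j⟩, ⟨hj, hmem⟩, huniq⟩ := hS.tower ((⇑h)^[n t] x)
    obtain rfl : t' = t :=
      hS.eq_of_mem_column ⟨k, j, hj, hmem⟩ ((hS.iterate_mem_column_iff _).2 hx)
    refine ⟨⟨t', k, j⟩, ⟨hj, hmem⟩, ?_⟩
    rintro ⟨s, k', j'⟩ ⟨hj', hmem'⟩
    obtain rfl : s = t' :=
      hS.eq_of_mem_column ((hS.iterate_mem_column_iff _).1 ⟨k', j', hj', hmem'⟩) hx
    exact huniq _ ⟨hj', hmem'⟩


theorem refine_Y_disjoint (hS : IsReturnSystem h P S) (hD : Pairwise (Disjoint on D))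
    (t : Fin S.T) {i i' : Fin (S.K t * n)} (hne : i ≠ i') :
    Disjoint ((S.refine D).Y t i) ((S.refine D).Y t i') := by
  obtain ⟨⟨k, r⟩, rfl⟩ := finProdFinEquiv.surjective i
  obtain ⟨⟨k', r'⟩, rfl⟩ := finProdFinEquiv.surjective i'
  simp only [ReturnSystem.refine_Y_finProdFinEquiv]
  by_cases hk : k = k'
  · subst hk
    exact (hD fun hr => hne (by rw [hr])).mono inter_subset_right inter_subset_right
  · exact (hS.Y_disjoint t k k' hk).mono inter_subset_left inter_subset_left

theorem refine (hS : IsReturnSystem h P S) (hn : 0 < n) (hD_clopen : ∀ r, IsClopen (D r))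
    (hD_disjoint : Pairwise (Disjoint on D)) (hD_cover : ⋃ r, D r = univ) :
    IsReturnSystem h P (S.refine D) where
  T_pos := hS.T_pos
  base_isCompact := hS.base_isCompact
  base_isOpen := hS.base_isOpen
  base_subset := hS.base_subset
  K_pos t := Nat.mul_pos (hS.K_pos t) hn
  Y_isCompact t i := (hS.Y_isCompact t _).inter_right (hD_clopen _).isClosed
  Y_isOpen t i := (hS.Y_isOpen t _).inter (hD_clopen _).isOpen
  Y_disjoint t i i' := hS.refine_Y_disjoint hD_disjoint t
  Y_iUnion (t : Fin S.T) := by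
    show ⋃ i : Fin (S.K t * n), S.Y t (finProdFinEquiv.symm i).1 ∩ D (finProdFinEquiv.symm i).2
      = S.base t
    rw [← hS.Y_iUnion t, finProdFinEquiv.symm.surjective.iUnion_comp
      (fun p => S.Y t p.1 ∩ D p.2), iUnion_prod']
    simp only [← inter_iUnion, hD_cover, inter_univ]
  J_pos t i := hS.J_pos t _
  returnTime t i x hx := hS.returnTime t _ x hx.1
  image_disjoint (t : Fin S.T) i i' hne := by
    obtain ⟨⟨k, r⟩, rfl⟩ := finProdFinEquiv.surjective i
    obtain ⟨⟨k', r'⟩, rfl⟩ := finProdFinEquiv.surjective i'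
    by_cases hk : k = k'
    · subst hk
      simp only [ReturnSystem.refine_J_finProdFinEquiv]
      exact (disjoint_image_iff (h.injective.iterate _)).2 (hS.refine_Y_disjoint hD_disjoint t hne)
    · simp only [ReturnSystem.refine_J_finProdFinEquiv, ReturnSystem.refine_Y_finProdFinEquiv]
      exact (hS.image_disjoint t k k' hk).mono (image_mono inter_subset_left)
        (image_mono inter_subset_left)
  image_iUnion (t : Fin S.T) := by
    show ⋃ i : Fin (S.K t * n), (⇑h)^[S.J t (finProdFinEquiv.symm i).1] ''
      (S.Y t (finProdFinEquiv.symm i).1 ∩ D (finProdFinEquiv.symm i).2) = S.base t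
    rw [← hS.image_iUnion t, finProdFinEquiv.symm.surjective.iUnion_comp
      (fun p => (⇑h)^[S.J t p.1] '' (S.Y t p.1 ∩ D p.2)), iUnion_prod']
    refine iUnion_congr fun k => ?_
    dsimp only
    rw [← Set.image_iUnion, ← inter_iUnion, hD_cover, inter_univ]
  tower x := by
    show ∃! p : Σ t : Fin S.T, Fin (S.K t * n) × ℕ,
      p.2.2 < S.J p.1 (finProdFinEquiv.symm p.2.1).1 ∧
        x ∈ (⇑h)^[p.2.2] '' (S.Y p.1 (finProdFinEquiv.symm p.2.1).1 ∩
          D (finProdFinEquiv.symm p.2.1).2)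
    obtain ⟨⟨t, k, j⟩, ⟨hj, hx⟩, huniq⟩ := hS.tower x
    rw [Homeomorph.mem_image_iterate_iff] at hx
    obtain ⟨r, hr⟩ := mem_iUnion.1 (hD_cover ▸ mem_univ ((⇑h.symm)^[j] x))
    refine ⟨⟨t, finProdFinEquiv (k, r), j⟩, ?_, ?_⟩
    · simp only [Equiv.symm_apply_apply, Homeomorph.mem_image_iterate_iff]
      exact ⟨hj, hx, hr⟩
    rintro ⟨t', i, j'⟩ ⟨hj', hx'⟩
    obtain ⟨⟨k', r'⟩, rfl⟩ := finProdFinEquiv.surjective i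
    simp only [Equiv.symm_apply_apply, Homeomorph.mem_image_iterate_iff] at hj' hx'
    cases huniq ⟨t', k', j'⟩ ⟨hj', h.mem_image_iterate_iff.2 hx'.1⟩
    obtain rfl : r' = r := hD_disjoint.eq (not_disjoint_iff.2 ⟨_, hx'.2, hr⟩)
    rfl

end IsReturnSystem

namespace ReturnSystem

variable (h : X ≃ₜ X) (S : ReturnSystem X) {n : ℕ} (D : Fin n → Set X)

theorem finer_partOne_refine : Finer ((S.refine D).partOne h) (S.partOne h) := by
  rintro _ ⟨t, i, j, hj, rfl⟩
  exact ⟨_, ⟨t, _, j, hj, rfl⟩, image_mono inter_subset_left⟩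

theorem finer_partTwo_refine : Finer ((S.refine D).partTwo h) (S.partTwo h) := by
  rintro _ ⟨t, i, j, hj₀, hj, rfl⟩
  exact ⟨_, ⟨t, _, j, hj₀, hj, rfl⟩, image_mono inter_subset_left⟩

end ReturnSystem

end

theorem returnSystem_new_bases_from_old_partition_general
    {X : Type*} [TopologicalSpace X]
    [TopologicalSpace.MetrizableSpace X] (h : X ≃ₜ X)
    (P : Set (Set X))
    (S : ReturnSystem X) (hS : IsReturnSystem h P S)
    (S1 : ReturnSystem X) (hS1 : IsReturnSystem h (S.partOne h) S1) :
    ∃ (K' : Fin S.T → ℕ) (Y' : (t : Fin S.T) → Fin (K' t) → Set X)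
      (J' : (t : Fin S.T) → Fin (K' t) → ℕ) (S1' : ReturnSystem X),
      IsReturnSystem h P ⟨S.T, S.base, K', Y', J'⟩ ∧
      IsReturnSystem h (S.partOne h) S1' ∧
      Finer ((ReturnSystem.mk S.T S.base K' Y' J').partOne h) (S.partOne h) ∧
      Finer ((ReturnSystem.mk S.T S.base K' Y' J').partTwo h) (S.partTwo h) ∧
      ∀ s : Fin S1'.T, ∃ (t : Fin S.T) (k : Fin (K' t)), S1'.base s = Y' t k := by
  have hpull : ∀ s, ∃ t k j, (⇑h)^[j] ⁻¹' S1.base s ⊆ S.Y t k := by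
    intro s
    obtain ⟨_, ⟨t, k, j, -, rfl⟩, hs⟩ := hS1.base_subset s
    exact ⟨t, k, j, (preimage_mono hs).trans (preimage_image_eq _ (h.injective.iterate j)).le⟩
  choose t₁ k₁ j₁ hpull using hpull
  have hS1' : IsReturnSystem h (S.partOne h) (S1.shift h j₁) :=
    hS1.shift j₁ fun s =>
      ⟨S.Y (t₁ s) (k₁ s), ⟨t₁ s, k₁ s, 0, hS.J_pos _ _, (image_id _).symm⟩, hpull s⟩
  have hC : ∀ s, IsClopen ((S1.shift h j₁).base s) :=
    fun s => ⟨(hS1'.base_isCompact s).isClosed, hS1'.base_isOpen s⟩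
  refine ⟨_, _, _, S1.shift h j₁, hS.refine (Nat.succ_pos _) (isClopen_snocComplUnion hC)
    (pairwise_disjoint_snocComplUnion hS1'.pairwise_disjoint_base)
    (iUnion_snocComplUnion _), hS1', S.finer_partOne_refine h _, S.finer_partTwo_refine h _,
    fun s => ⟨t₁ s, finProdFinEquiv (k₁ s, s.castSucc), ?_⟩⟩
  simp only [Equiv.symm_apply_apply, snocComplUnion_castSucc]
  exact (inter_eq_right.2 (hpull s)).symm

/-- Theorem (Statement 9): given a system `S` subordinate to `P` and a system `S¹`
subordinate to `P₁(S)`, there are a refinement `S'` of `S` with the same bases and a system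
`S¹'` subordinate to `P₁(S)` whose bases are among the pieces `Y'_{t,k}` of `S'`. -/
theorem returnSystem_new_bases_from_old_partition
    {X : Type*} [TopologicalSpace X] [CompactSpace X]
    [TopologicalSpace.MetrizableSpace X] [TotallyDisconnectedSpace X] (h : X ≃ₜ X)
    (P : Set (Set X)) (hP : IsPartition P)
    (S : ReturnSystem X) (hS : IsReturnSystem h P S)
    (S1 : ReturnSystem X) (hS1 : IsReturnSystem h (S.partOne h) S1) :
    ∃ (K' : Fin S.T → ℕ) (Y' : (t : Fin S.T) → Fin (K' t) → Set X)
      (J' : (t : Fin S.T) → Fin (K' t) → ℕ) (S1' : ReturnSystem X),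
      IsReturnSystem h P ⟨S.T, S.base, K', Y', J'⟩ ∧
      IsReturnSystem h (S.partOne h) S1' ∧
      Finer ((ReturnSystem.mk S.T S.base K' Y' J').partOne h) (S.partOne h) ∧
      Finer ((ReturnSystem.mk S.T S.base K' Y' J').partTwo h) (S.partTwo h) ∧
      ∀ s : Fin S1'.T, ∃ (t : Fin S.T) (k : Fin (K' t)), S1'.base s = Y' t k :=
  returnSystem_new_bases_from_old_partition_general h P S hS S1 hS1
end

section
/- Let (X, h) be a fiberwise essentially minimal zero-dimensional system, with closed set Z ⊆ X and quotient map ψ : X → Z as in the definition, let P be a partition of X, and let X_1, …, X_T be compact open subsets of X, each contained in an element of P. Then there exists a system S = (T, (X_t), (K_t), (Y_{t,k}), (J_{t,k})) of finite first return time maps subordinate to P whose bases are exactly X_1, …, X_T if and only if for every z ∈ Z there is precisely one t ∈ {1, …, T} such that X_t intersects ψ⁻¹(z), and moreover X_t ∩ ψ⁻¹(z) intersects the minimal set of (ψ⁻¹(z), h|_{ψ⁻¹(z)}). -/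
open Set Topology

variable {X : Type*}

/-!
Let `A` be the union of the bases. A system with bases `B t` exists iff every forward orbit
enters `A` and no forward orbit meets two different bases. Given these, let `Y t k` be the set of
points of `B t` whose first return time to `A` is `k + 1`; by compactness only finitely many
return times occur. Every point is `h^[j] y` for exactly one `y ∈ A` and `j` below the return
time of `y` (namely `j` is the backward hitting time of `A`), which makes the towers a partition.
Conversely, the tower over a base is forward invariant and towers over different bases are
disjoint.

In the fiberwise essentially minimal setting both conditions become fiberwise: fibers are
invariant, and an open set meeting the minimal set of a fiber is entered by the forward orbit
of every point of that fiber, since the orbit closure contains a minimal set.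
-/

open Function

theorem Function.LeftInverse.iterate_iterate_of_le {f g : X → X} (hgf : LeftInverse g f)
    {i j : ℕ} (hij : i ≤ j) (x : X) : g^[i] (f^[j] x) = f^[j - i] x := by
  obtain ⟨k, rfl⟩ := Nat.exists_eq_add_of_le hij
  rw [iterate_add_apply, hgf.iterate i, Nat.add_sub_cancel_left]

section HitTime

variable (f : X → X) {A : Set X} (hA : ∀ x, ∃ n, f^[n] x ∈ A)

open Classical in
noncomputable def hitTime (x : X) : ℕ := Nat.find (hA x)

variable {f}

open Classical in
theorem iterate_hitTime_mem (x : X) : f^[hitTime f hA x] x ∈ A := Nat.find_spec (hA x)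

open Classical in
theorem hitTime_le {x : X} {n : ℕ} (hn : f^[n] x ∈ A) : hitTime f hA x ≤ n :=
  Nat.find_min' (hA x) hn

open Classical in
theorem iterate_notMem_of_lt_hitTime {x : X} {n : ℕ} (hn : n < hitTime f hA x) :
    f^[n] x ∉ A :=
  Nat.find_min (hA x) hn

variable [TopologicalSpace X]

theorem isClopen_setOf_hitTime_eq (hf : Continuous f) (hAc : IsClopen A) (k : ℕ) :
    IsClopen {x | hitTime f hA x = k} := by
  have hlevel : {x | hitTime f hA x = k} =
      f^[k] ⁻¹' A ∩ ⋂ i ∈ Finset.range k, f^[i] ⁻¹' Aᶜ := by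
    ext x
    simp [hitTime, Nat.find_eq_iff]
  rw [hlevel]
  exact (hAc.preimage (hf.iterate k)).inter
    (isClopen_biInter_finset fun i _ => hAc.compl.preimage (hf.iterate i))

theorem exists_forall_hitTime_le [CompactSpace X] (hf : Continuous f) (hAo : IsOpen A) :
    ∃ N, ∀ x, hitTime f hA x ≤ N := by
  have hopen (N : ℕ) : IsOpen {x | hitTime f hA x ≤ N} := by
    have hsub : {x | hitTime f hA x ≤ N} = ⋃ n ≤ N, f^[n] ⁻¹' A := by
      ext x
      simp only [mem_iUnion, mem_preimage, exists_prop]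
      exact ⟨fun hx => ⟨_, hx, iterate_hitTime_mem hA x⟩,
        fun ⟨n, hn, hx⟩ => (hitTime_le hA hx).trans hn⟩
    rw [hsub]
    exact isOpen_biUnion fun n _ => hAo.preimage (hf.iterate n)
  obtain ⟨N, hN⟩ := isCompact_univ.elim_directed_cover _ hopen
    (fun x _ => mem_iUnion.2 ⟨_, le_refl (hitTime f hA x)⟩)
    (Monotone.directed_le fun _ _ hmn _ hx => le_trans hx hmn)
  exact ⟨N, fun x => hN (mem_univ x)⟩

end HitTime

section FirstReturn

variable [TopologicalSpace X] (h : X ≃ₜ X) {A : Set X} (hA : ∀ x, ∃ n, (⇑h)^[n] x ∈ A)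

noncomputable def firstReturn (x : X) : ℕ := hitTime h hA (h x) + 1

variable {h}

theorem firstReturn_pos (x : X) : 0 < firstReturn h hA x := Nat.succ_pos _

theorem iterate_firstReturn_mem (x : X) : (⇑h)^[firstReturn h hA x] x ∈ A := by
  rw [firstReturn, iterate_succ_apply]
  exact iterate_hitTime_mem hA (h x)

theorem firstReturn_le {x : X} {n : ℕ} (hn : 0 < n) (hnA : (⇑h)^[n] x ∈ A) :
    firstReturn h hA x ≤ n := by
  obtain ⟨m, rfl⟩ := Nat.exists_eq_succ_of_ne_zero hn.ne'
  rw [iterate_succ_apply] at hnA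
  exact Nat.succ_le_succ (hitTime_le hA hnA)

theorem iterate_notMem_of_lt_firstReturn {x : X} {n : ℕ} (hn : 0 < n)
    (hlt : n < firstReturn h hA x) : (⇑h)^[n] x ∉ A :=
  fun hnA => (firstReturn_le hA hn hnA).not_gt hlt

theorem exists_symm_iterate_mem {N : ℕ} (hN : ∀ x, hitTime h hA x ≤ N) (x : X) :
    ∃ n, (⇑h.symm)^[n] x ∈ A := by
  refine ⟨N - hitTime h hA ((⇑h.symm)^[N] x), ?_⟩
  rw [← LeftInverse.iterate_iterate_of_le h.apply_symm_apply (hN _)]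
  exact iterate_hitTime_mem hA _

theorem isClopen_setOf_firstReturn_eq (hAc : IsClopen A) (k : ℕ) :
    IsClopen {x | firstReturn h hA x = k + 1} := by
  have hlevel : {x | firstReturn h hA x = k + 1} = h ⁻¹' {x | hitTime h hA x = k} := by
    ext x
    simp [firstReturn]
  rw [hlevel]
  exact (isClopen_setOf_hitTime_eq hA h.continuous hAc k).preimage h.continuous

variable (hA' : ∀ x, ∃ n, (⇑h.symm)^[n] x ∈ A)

/-- The backward hitting time of `A` is the height of a point in the tower over `A`. -/
theorem hitTime_symm_iterate {y : X} (hy : y ∈ A) {j : ℕ} (hj : j < firstReturn h hA y) :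
    hitTime h.symm hA' ((⇑h)^[j] y) = j := by
  refine le_antisymm (hitTime_le hA' ?_) (not_lt.1 fun hlt => ?_)
  · rwa [LeftInverse.iterate (g := ⇑h.symm) h.symm_apply_apply j]
  · have hmem := iterate_hitTime_mem hA' ((⇑h)^[j] y)
    rw [LeftInverse.iterate_iterate_of_le h.symm_apply_apply hlt.le] at hmem
    exact iterate_notMem_of_lt_firstReturn hA (by omega) (by omega) hmem

theorem hitTime_symm_lt_firstReturn (x : X) :
    hitTime h.symm hA' x < firstReturn h hA ((⇑h.symm)^[hitTime h.symm hA' x] x) := by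
  by_contra! hle
  have hmem := iterate_firstReturn_mem hA ((⇑h.symm)^[hitTime h.symm hA' x] x)
  rw [LeftInverse.iterate_iterate_of_le h.apply_symm_apply hle] at hmem
  have hpos := firstReturn_pos hA ((⇑h.symm)^[hitTime h.symm hA' x] x)
  exact iterate_notMem_of_lt_hitTime hA' (by omega) hmem

theorem firstReturn_eq_of_iterate_eq (hA' : ∀ x, ∃ n, (⇑h.symm)^[n] x ∈ A) {y y' : X}
    (hy : y ∈ A) (hy' : y' ∈ A)
    (heq : (⇑h)^[firstReturn h hA y] y = (⇑h)^[firstReturn h hA y'] y') :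
    firstReturn h hA y = firstReturn h hA y' := by
  rw [firstReturn, firstReturn, iterate_succ_apply', iterate_succ_apply'] at heq
  have hdepth := hitTime_symm_iterate hA hA' hy (Nat.lt_succ_self _)
  rw [h.injective heq, hitTime_symm_iterate hA hA' hy' (Nat.lt_succ_self _)] at hdepth
  rw [firstReturn, firstReturn, hdepth]

end FirstReturn

def OrbitSeparated [TopologicalSpace X] {ι : Type*} (h : X ≃ₜ X) (B : ι → Set X) : Prop :=
  ∀ ⦃x : X⦄ ⦃t t' : ι⦄ (n : ℕ), x ∈ B t → (⇑h)^[n] x ∈ B t' → t = t'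

section OfBases

variable [TopologicalSpace X] {h : X ≃ₜ X} {T : ℕ} {B : Fin T → Set X}
  (hA : ∀ x, ∃ n, (⇑h)^[n] x ∈ ⋃ t, B t)

noncomputable def ReturnSystem.ofBases (h : X ≃ₜ X) (B : Fin T → Set X)
    (hA : ∀ x, ∃ n, (⇑h)^[n] x ∈ ⋃ t, B t) (N : ℕ) : ReturnSystem X where
  T := T
  base := B
  K _ := N + 1
  Y t k := B t ∩ {x | firstReturn h hA x = k + 1}
  J _ k := k + 1

theorem iterate_firstReturn_mem_of_mem (hsep : OrbitSeparated h B) {x : X} {t : Fin T}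
    (hx : x ∈ B t) : (⇑h)^[firstReturn h hA x] x ∈ B t := by
  obtain ⟨t', ht'⟩ := mem_iUnion.1 (iterate_firstReturn_mem hA x)
  rwa [hsep _ hx ht']

theorem firstReturnTime_eq_firstReturn (hsep : OrbitSeparated h B) {x : X} {t : Fin T}
    (hx : x ∈ B t) : firstReturnTime h (B t) x = firstReturn h hA x := by
  refine IsLeast.csInf_eq ⟨⟨_, ⟨firstReturn_pos hA x, iterate_firstReturn_mem_of_mem hA hsep hx⟩,
    rfl⟩, ?_⟩
  rintro _ ⟨n, ⟨hn, hnB⟩, rfl⟩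
  exact Nat.cast_le.2 (firstReturn_le hA hn (mem_iUnion.2 ⟨t, hnB⟩))

variable {N : ℕ}

theorem iUnion_iterate_image_setOf_firstReturn_eq (hsep : OrbitSeparated h B)
    (hN : ∀ x, hitTime h hA x ≤ N) (t : Fin T) :
    ⋃ k : Fin (N + 1), (⇑h)^[k + 1] '' (B t ∩ {x | firstReturn h hA x = k + 1}) = B t := by
  have hA' := exists_symm_iterate_mem hA hN
  refine (iUnion_subset fun k => ?_).antisymm fun x hx => ?_
  · rintro _ ⟨y, ⟨hyt, hyk⟩, rfl⟩
    rw [← show firstReturn h hA y = k + 1 from hyk]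
    exact iterate_firstReturn_mem_of_mem hA hsep hyt
  · obtain ⟨t', hyt'⟩ := mem_iUnion.1 (iterate_hitTime_mem hA' (h.symm x))
    set d := hitTime h.symm hA' (h.symm x)
    set y := (⇑h.symm)^[d] (h.symm x)
    have hyx : (⇑h)^[d + 1] y = x := by
      rw [iterate_succ_apply', LeftInverse.iterate (g := ⇑h) h.apply_symm_apply d,
        h.apply_symm_apply]
    have hry : firstReturn h hA y = d + 1 :=
      le_antisymm (firstReturn_le hA d.succ_pos (hyx ▸ mem_iUnion.2 ⟨t, hx⟩))
        (hitTime_symm_lt_firstReturn hA hA' _)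
    obtain rfl : t' = t := hsep (d + 1) hyt' (hyx ▸ hx)
    have hdN : d < N + 1 := by
      have := hN (h y)
      rw [firstReturn] at hry
      omega
    exact mem_iUnion.2 ⟨⟨d, hdN⟩, y, ⟨hyt', hry⟩, hyx⟩

theorem existsUnique_mem_iterate_image_setOf_firstReturn_eq (hsep : OrbitSeparated h B)
    (hN : ∀ x, hitTime h hA x ≤ N) (x : X) :
    ∃! p : Σ _ : Fin T, Fin (N + 1) × ℕ, p.2.2 < p.2.1 + 1 ∧
      x ∈ (⇑h)^[p.2.2] '' (B p.1 ∩ {y | firstReturn h hA y = p.2.1 + 1}) := by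
  have hA' := exists_symm_iterate_mem hA hN
  obtain ⟨t, hyt⟩ := mem_iUnion.1 (iterate_hitTime_mem hA' x)
  refine ⟨⟨t, ⟨hitTime h hA (h ((⇑h.symm)^[hitTime h.symm hA' x] x)), Nat.lt_succ_of_le (hN _)⟩,
    hitTime h.symm hA' x⟩, ⟨hitTime_symm_lt_firstReturn hA hA' x, _, ⟨hyt, rfl⟩,
    LeftInverse.iterate (g := ⇑h) h.apply_symm_apply _ x⟩, ?_⟩
  rintro ⟨t', k', j⟩ ⟨hj, y', ⟨hy't', hy'k'⟩, hx⟩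
  have hy'k' : firstReturn h hA y' = k' + 1 := hy'k'
  have hjd : j = hitTime h.symm hA' x := by
    rw [← hx, hitTime_symm_iterate hA hA' (mem_iUnion.2 ⟨t', hy't'⟩) (hy'k' ▸ hj)]
  have hyy : y' = (⇑h.symm)^[j] x := by
    rw [← hx, LeftInverse.iterate (g := ⇑h.symm) h.symm_apply_apply j y']
  subst hjd hyy
  obtain rfl : t' = t := hsep 0 hy't' hyt
  obtain rfl : k' = ⟨_, Nat.lt_succ_of_le (hN _)⟩ := Fin.ext (Nat.succ_injective hy'k'.symm)
  rfl

theorem isReturnSystem_ofBases {P : Set (Set X)} (hT : 0 < T) (hBc : ∀ t, IsCompact (B t))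
    (hBo : ∀ t, IsOpen (B t)) (hBsub : ∀ t, ∃ U ∈ P, B t ⊆ U) (hAc : IsClopen (⋃ t, B t))
    (hsep : OrbitSeparated h B) (hN : ∀ x, hitTime h hA x ≤ N) :
    IsReturnSystem h P (ReturnSystem.ofBases h B hA N) := by
  have hA' := exists_symm_iterate_mem hA hN
  have hlevel := isClopen_setOf_firstReturn_eq hA hAc
  exact {
    T_pos := hT
    base_isCompact := hBc
    base_isOpen := hBo
    base_subset := hBsub
    K_pos _ := N.succ_pos
    Y_isCompact t k := (hBc t).inter_right (hlevel k).isClosed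
    Y_isOpen t k := (hBo t).inter (hlevel k).isOpen
    Y_disjoint t k k' hkk' := disjoint_left.2 fun x ⟨_, hk⟩ ⟨_, hk'⟩ =>
      hkk' (Fin.ext (Nat.succ_injective (hk.symm.trans hk')))
    Y_iUnion t := (iUnion_subset fun _ => inter_subset_left).antisymm fun x hx =>
      mem_iUnion.2 ⟨⟨hitTime h hA (h x), Nat.lt_succ_of_le (hN _)⟩, hx, rfl⟩
    J_pos _ k := k.val.succ_pos
    returnTime t k x hx := by
      change firstReturnTime h (B t) x = ((k + 1 : ℕ) : ℕ∞)
      rw [firstReturnTime_eq_firstReturn hA hsep hx.1]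
      exact congrArg _ hx.2
    image_disjoint t k k' hkk' := by
      refine disjoint_left.2 ?_
      rintro _ ⟨y, ⟨hyt, hyk⟩, rfl⟩ ⟨y', ⟨hy't, hy'k⟩, heq⟩
      have hyk : firstReturn h hA y = k + 1 := hyk
      have hy'k : firstReturn h hA y' = k' + 1 := hy'k
      refine hkk' (Fin.ext (Nat.succ_injective (hyk.symm.trans (Eq.trans ?_ hy'k))))
      refine firstReturn_eq_of_iterate_eq hA hA' (mem_iUnion.2 ⟨t, hyt⟩)
        (mem_iUnion.2 ⟨t, hy't⟩) ?_
      rw [hyk, hy'k]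
      exact heq.symm
    image_iUnion := iUnion_iterate_image_setOf_firstReturn_eq hA hsep hN
    tower := existsUnique_mem_iterate_image_setOf_firstReturn_eq hA hsep hN }

end OfBases

def ReturnSystem.tower [TopologicalSpace X] (h : X ≃ₜ X) (S : ReturnSystem X) (t : Fin S.T) :
    Set X :=
  {x | ∃ k j, j < S.J t k ∧ x ∈ (⇑h)^[j] '' S.Y t k}

namespace IsReturnSystem

variable [TopologicalSpace X] {h : X ≃ₜ X} {P : Set (Set X)} {S : ReturnSystem X}

theorem base_subset_tower (hS : IsReturnSystem h P S) (t : Fin S.T) :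
    S.base t ⊆ S.tower h t := fun x hx => by
  rw [← hS.Y_iUnion t] at hx
  obtain ⟨k, hk⟩ := mem_iUnion.1 hx
  exact ⟨k, 0, hS.J_pos t k, x, hk, rfl⟩

theorem mapsTo_tower (hS : IsReturnSystem h P S) (t : Fin S.T) :
    MapsTo h (S.tower h t) (S.tower h t) := by
  rintro _ ⟨k, j, hj, y, hy, rfl⟩
  rcases (Nat.succ_le_of_lt hj).lt_or_eq with hlt | heq
  · exact ⟨k, j + 1, hlt, y, hy, iterate_succ_apply' _ _ _⟩
  · refine hS.base_subset_tower t ?_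
    rw [← hS.image_iUnion t]
    exact mem_iUnion.2 ⟨k, y, hy, by rw [← heq, iterate_succ_apply']⟩

theorem eq_of_mem_tower (hS : IsReturnSystem h P S) {x : X} {t t' : Fin S.T}
    (ht : x ∈ S.tower h t) (ht' : x ∈ S.tower h t') : t = t' := by
  obtain ⟨k, j, hj, hx⟩ := ht
  obtain ⟨k', j', hj', hx'⟩ := ht'
  exact congrArg Sigma.fst
    ((hS.tower x).unique (y₁ := ⟨t, k, j⟩) (y₂ := ⟨t', k', j'⟩) ⟨hj, hx⟩ ⟨hj', hx'⟩)

theorem orbitSeparated (hS : IsReturnSystem h P S) : OrbitSeparated h S.base :=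
  fun _ t t' n hx hnx => hS.eq_of_mem_tower
    ((hS.mapsTo_tower t).iterate n (hS.base_subset_tower t hx)) (hS.base_subset_tower t' hnx)

theorem exists_iterate_mem_iUnion_base (hS : IsReturnSystem h P S) (x : X) :
    ∃ n, (⇑h)^[n] x ∈ ⋃ t, S.base t := by
  obtain ⟨⟨t, k, j⟩, ⟨hj, y, hy, rfl⟩, -⟩ := hS.tower x
  refine ⟨S.J t k - j, mem_iUnion.2 ⟨t, ?_⟩⟩
  rw [← iterate_add_apply, Nat.sub_add_cancel hj.le, ← hS.image_iUnion t]
  exact mem_iUnion.2 ⟨k, y, hy, rfl⟩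

end IsReturnSystem

theorem exists_isReturnSystem_iff [TopologicalSpace X] [CompactSpace X] [T2Space X]
    {h : X ≃ₜ X} {P : Set (Set X)} {T : ℕ} (hT : 0 < T) {B : Fin T → Set X}
    (hBc : ∀ t, IsCompact (B t)) (hBo : ∀ t, IsOpen (B t)) (hBsub : ∀ t, ∃ U ∈ P, B t ⊆ U) :
    (∃ (K : Fin T → ℕ) (Y : (t : Fin T) → Fin (K t) → Set X)
        (J : (t : Fin T) → Fin (K t) → ℕ), IsReturnSystem h P ⟨T, B, K, Y, J⟩) ↔
      OrbitSeparated h B ∧ ∀ x, ∃ n, (⇑h)^[n] x ∈ ⋃ t, B t := by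
  refine ⟨fun ⟨_, _, _, hS⟩ => ⟨hS.orbitSeparated, hS.exists_iterate_mem_iUnion_base⟩,
    fun ⟨hsep, hA⟩ => ?_⟩
  have hAc : IsClopen (⋃ t, B t) := ⟨(isCompact_iUnion hBc).isClosed, isOpen_iUnion hBo⟩
  obtain ⟨N, hN⟩ := exists_forall_hitTime_le hA h.continuous hAc.isOpen
  exact ⟨_, _, _, isReturnSystem_ofBases hA hT hBc hBo hBsub hAc hsep hN⟩

theorem IsMinimalSet.mapsTo [TopologicalSpace X] {h : X ≃ₜ X} {M : Set X}
    (hM : IsMinimalSet h M) : MapsTo h M M :=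
  mapsTo_iff_image_subset.2 hM.2.2.1.subset

section MinimalSets

variable [TopologicalSpace X] [CompactSpace X] {h : X ≃ₜ X}

/-- Zorn's lemma over closed sets with `h '' D ⊆ D`: a minimal one `M` satisfies `h '' M = M`,
since `h '' M` is again such a set. -/
theorem exists_isMinimalSet_subset {C : Set X} (hC : IsClosed C) (hCh : MapsTo h C C)
    (hne : C.Nonempty) : ∃ M ⊆ C, IsMinimalSet h M := by
  let S : Set (Set X) := {D | D ⊆ C ∧ D.Nonempty ∧ IsClosed D ∧ MapsTo h D D}
  have hchain (c) (hcS : c ⊆ S) (hc : IsChain (· ⊆ ·) c) (hcne : c.Nonempty) :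
      ∃ lb ∈ S, ∀ D ∈ c, lb ⊆ D := by
    have := hcne.to_subtype
    obtain ⟨D, hD⟩ := hcne
    refine ⟨⋂₀ c, ⟨(sInter_subset_of_mem hD).trans (hcS hD).1, ?_,
      isClosed_sInter fun D hD => (hcS hD).2.2.1,
      fun x hx => mem_sInter.2 fun D hD => (hcS hD).2.2.2 (hx D hD)⟩,
      fun D hD => sInter_subset_of_mem hD⟩
    refine IsCompact.nonempty_sInter_of_directed_nonempty_isCompact_isClosed
      (fun U hU V hV => (hc.total hU hV).elim (fun hUV => ⟨U, hU, subset_rfl, hUV⟩)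
        (fun hVU => ⟨V, hV, hVU, subset_rfl⟩))
      (fun D hD => (hcS hD).2.1) (fun D hD => (hcS hD).2.2.1.isCompact)
      (fun D hD => (hcS hD).2.2.1)
  obtain ⟨M, -, hM⟩ := zorn_superset_nonempty S hchain C ⟨subset_rfl, hne, hC, hCh⟩
  obtain ⟨hMC, hMne, hMcl, hMh⟩ := hM.prop
  have himage : h '' M = M := hM.eq_of_le ⟨(hMh.image_subset).trans hMC, hMne.image h,
    h.isClosed_image.2 hMcl, fun _ ⟨y, hy, hyx⟩ => hyx ▸ mem_image_of_mem h (hMh hy)⟩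
    hMh.image_subset
  exact ⟨M, hMC, hMne, hMcl, himage, fun Y hYM hYne hYcl hYh => hM.eq_of_le
    ⟨hYM.trans hMC, hYne, hYcl, mapsTo_iff_image_subset.2 hYh.subset⟩ hYM⟩

theorem exists_iterate_mem_of_forall_isMinimalSetWithin {F U : Set X} (hF : IsClosed F)
    (hFh : MapsTo h F F) (hU : IsOpen U)
    (hUM : ∀ M, IsMinimalSetWithin h F M → (U ∩ M).Nonempty) {x : X} (hx : x ∈ F) :
    ∃ n, (⇑h)^[n] x ∈ U := by
  have horbit : MapsTo h (closure (range fun n => (⇑h)^[n] x))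
      (closure (range fun n => (⇑h)^[n] x)) := by
    refine mapsTo_iff_image_subset.2 ((image_closure_subset_closure_image h.continuous).trans
      (closure_mono ?_))
    rintro _ ⟨_, ⟨n, rfl⟩, rfl⟩
    exact ⟨n + 1, iterate_succ_apply' _ _ _⟩
  obtain ⟨M, hMO, hM⟩ := exists_isMinimalSet_subset isClosed_closure horbit
    ⟨x, subset_closure ⟨0, rfl⟩⟩
  have hOF : closure (range fun n => (⇑h)^[n] x) ⊆ F :=
    closure_minimal (range_subset_iff.2 fun n => hFh.iterate n hx) hF
  obtain ⟨p, hpU, hpM⟩ := hUM M ⟨hMO.trans hOF, hM⟩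
  obtain ⟨_, hyU, n, rfl⟩ := mem_closure_iff.1 (hMO hpM) U hU hpU
  exact ⟨n, hyU⟩

end MinimalSets

namespace IsFiberwiseWitness

variable [TopologicalSpace X] {h : X ≃ₜ X} {Z : Set X} {ψ : X → Z}

theorem mapsTo_fiber (hW : IsFiberwiseWitness h Z ψ) (z : Z) :
    MapsTo h (ψ ⁻¹' {z}) (ψ ⁻¹' {z}) :=
  fun x hx => (hW.comp_h x).trans hx

theorem apply_iterate (hW : IsFiberwiseWitness h Z ψ) (n : ℕ) (x : X) :
    ψ ((⇑h)^[n] x) = ψ x :=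
  (hW.mapsTo_fiber (ψ x)).iterate n rfl

theorem isClosed_fiber [T1Space X] (hW : IsFiberwiseWitness h Z ψ) (z : Z) :
    IsClosed (ψ ⁻¹' {z}) :=
  isClosed_singleton.preimage hW.quotient.continuous

variable [CompactSpace X] [T1Space X] {T : ℕ} {B : Fin T → Set X}

theorem orbitSeparated_and_forall_exists_iterate_mem_iff (hW : IsFiberwiseWitness h Z ψ)
    (hBo : ∀ t, IsOpen (B t)) :
    (OrbitSeparated h B ∧ ∀ x, ∃ n, (⇑h)^[n] x ∈ ⋃ t, B t) ↔
      ∀ z : Z, ∃ t : Fin T, (B t ∩ ψ ⁻¹' {z}).Nonempty ∧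
        (∀ Y, IsMinimalSetWithin h (ψ ⁻¹' {z}) Y → (B t ∩ ψ ⁻¹' {z} ∩ Y).Nonempty) ∧
        ∀ t', (B t' ∩ ψ ⁻¹' {z}).Nonempty → t' = t := by
  constructor
  · rintro ⟨hsep, hA⟩ z
    obtain ⟨M, hM, hzM, hM_unique⟩ := hW.fiber z
    obtain ⟨n, hn⟩ := hA z
    obtain ⟨t, ht⟩ := mem_iUnion.1 hn
    have hnM : (⇑h)^[n] z ∈ M := hM.2.mapsTo.iterate n hzM
    refine ⟨t, ⟨_, ht, hM.1 hnM⟩, fun Y hY => hM_unique Y hY ▸ ⟨_, ⟨ht, hM.1 hnM⟩, hnM⟩,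
      fun t' ⟨x, hxt', hxz⟩ => ?_⟩
    obtain ⟨m, hm⟩ := exists_iterate_mem_of_forall_isMinimalSetWithin (hW.isClosed_fiber z)
      (hW.mapsTo_fiber z) (hBo t) (fun Y hY => hM_unique Y hY ▸ ⟨_, ht, hnM⟩) hxz
    exact hsep m hxt' hm
  · intro H
    refine ⟨fun x t t' n hxt hnt' => ?_, fun x => ?_⟩
    · obtain ⟨t₀, -, -, h_unique⟩ := H (ψ x)
      exact (h_unique t ⟨x, hxt, rfl⟩).trans (h_unique t' ⟨_, hnt', hW.apply_iterate n x⟩).symm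
    · obtain ⟨t₀, -, hmeet, -⟩ := H (ψ x)
      obtain ⟨n, hn⟩ := exists_iterate_mem_of_forall_isMinimalSetWithin (hW.isClosed_fiber _)
        (hW.mapsTo_fiber _) (hBo t₀)
        (fun Y hY => (hmeet Y hY).mono (inter_subset_inter_left _ inter_subset_left)) rfl
      exact ⟨n, mem_iUnion.2 ⟨t₀, hn⟩⟩

end IsFiberwiseWitness

theorem exists_returnSystem_with_given_bases_iff_general
    {X : Type*} [TopologicalSpace X] [CompactSpace X]
    [TopologicalSpace.MetrizableSpace X] (h : X ≃ₜ X)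
    (Z : Set X) (ψ : X → Z) (hW : IsFiberwiseWitness h Z ψ)
    (P : Set (Set X))
    (T : ℕ) (hT : 0 < T) (B : Fin T → Set X)
    (hBc : ∀ t, IsCompact (B t)) (hBo : ∀ t, IsOpen (B t))
    (hBsub : ∀ t, ∃ U ∈ P, B t ⊆ U) :
    (∃ (K : Fin T → ℕ) (Y : (t : Fin T) → Fin (K t) → Set X)
        (J : (t : Fin T) → Fin (K t) → ℕ),
        IsReturnSystem h P ⟨T, B, K, Y, J⟩) ↔
      ∀ z : Z, ∃ t : Fin T, (B t ∩ ψ ⁻¹' {z}).Nonempty ∧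
        (∀ Y, IsMinimalSetWithin h (ψ ⁻¹' {z}) Y → (B t ∩ ψ ⁻¹' {z} ∩ Y).Nonempty) ∧
        ∀ t', (B t' ∩ ψ ⁻¹' {z}).Nonempty → t' = t := by
  rw [exists_isReturnSystem_iff hT hBc hBo hBsub]
  exact hW.orbitSeparated_and_forall_exists_iterate_mem_iff hBo

/-- Theorem (Statement 15): given candidate bases `B 1, …, B T` (compact open, each inside
an element of the partition `P`), there is a system of finite first return time maps
subordinate to `P` with exactly these bases iff for every `z ∈ Z` precisely one base meets
the fiber `ψ⁻¹(z)`, and that intersection meets the minimal set of the fiber subsystem. -/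
theorem exists_returnSystem_with_given_bases_iff
    {X : Type*} [TopologicalSpace X] [CompactSpace X]
    [TopologicalSpace.MetrizableSpace X] [TotallyDisconnectedSpace X] (h : X ≃ₜ X)
    (Z : Set X) (ψ : X → Z) (hW : IsFiberwiseWitness h Z ψ)
    (P : Set (Set X)) (hP : IsPartition P)
    (T : ℕ) (hT : 0 < T) (B : Fin T → Set X)
    (hBc : ∀ t, IsCompact (B t)) (hBo : ∀ t, IsOpen (B t))
    (hBsub : ∀ t, ∃ U ∈ P, B t ⊆ U) :
    (∃ (K : Fin T → ℕ) (Y : (t : Fin T) → Fin (K t) → Set X)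
        (J : (t : Fin T) → Fin (K t) → ℕ),
        IsReturnSystem h P ⟨T, B, K, Y, J⟩) ↔
      ∀ z : Z, ∃ t : Fin T, (B t ∩ ψ ⁻¹' {z}).Nonempty ∧
        (∀ Y, IsMinimalSetWithin h (ψ ⁻¹' {z}) Y → (B t ∩ ψ ⁻¹' {z} ∩ Y).Nonempty) ∧
        ∀ t', (B t' ∩ ψ ⁻¹' {z}).Nonempty → t' = t :=
  exists_returnSystem_with_given_bases_iff_general h Z ψ hW P T hT B hBc hBo hBsub
end
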